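/- arXiv:1505.01079 — 2 statements merged into one kernel-verified Lean document; each statement's English description precedes it below -/
import Mathlib

section
/- If the structure morphism S → R factors through a localization S → S[L_1^{-1}] for a multiplicative subset L_1 ⊆ S, then HS^m_{R/S} ≅ HS^m_{R/S[L_1^{-1}]}. -/
noncomputable section
open MvPolynomial

/-- The universal symbols `d^n x` for the Hasse–Schmidt algebra. -/
def hsGen (R : Type*) [CommRing R] (m : ℕ) (n : ℕ) (x : R) :
    MvPolynomial ({i : ℕ // 1 ≤ i ∧ i ≤ m} × R) R :=
  if h : 1 ≤ n ∧ n ≤ m then X (⟨n, h⟩, x) else if n = 0 then C x else 0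

/-- The ideal of Hasse–Schmidt relations. -/
def hsRel (S R : Type*) [CommRing S] [CommRing R] [Algebra S R] (m : ℕ) :
    Ideal (MvPolynomial ({i : ℕ // 1 ≤ i ∧ i ≤ m} × R) R) :=
  Ideal.span {p | (∃ i : ℕ, ∃ x y : R,
      p = hsGen R m i (x + y) - hsGen R m i x - hsGen R m i y) ∨
    (∃ i : ℕ, 1 ≤ i ∧ ∃ s : S, p = hsGen R m i (algebraMap S R s)) ∨
    (∃ k : ℕ, k ≤ m ∧ ∃ x y : R, p = hsGen R m k (x * y) -
      ∑ q ∈ Finset.HasAntidiagonal.antidiagonal k, hsGen R m q.1 x * hsGen R m q.2 y)}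

/-- The Hasse–Schmidt algebra `HS^m_{R/S}`, characterized by the natural bijection
`Hom_{S-alg}(HS^m_{R/S}, Q) ≅ Hom_{S-alg}(R, Q[t]/(t^{m+1}))` for all `S`-algebras `Q`. -/
def HSAlg (S R : Type*) [CommRing S] [CommRing R] [Algebra S R] (m : ℕ) : Type _ :=
  MvPolynomial ({i : ℕ // 1 ≤ i ∧ i ≤ m} × R) R ⧸ hsRel S R m

section
variable (S R : Type*) [CommRing S] [CommRing R] [Algebra S R] (m : ℕ)

instance : CommRing (HSAlg S R m) := Ideal.Quotient.commRing _
instance : Algebra S (HSAlg S R m) := Ideal.Quotient.algebra S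
instance : Algebra R (HSAlg S R m) := Ideal.Quotient.algebra R

end

/-! The two presentations of `HSAlg` share generators and differ only in the relations
`d^i(a) = 0` for scalars `a`. A fraction `t = s / c` of `S[L₁⁻¹]` satisfies
`d^i(t) * c = d^i(t * c) = d^i(s) = 0` by the Leibniz rule, because `d^j(c) = 0` for `j ≥ 1`;
as `c` is invertible in `R`, `d^i(t) = 0` already follows from the relations over `S`. -/

section HasseSchmidtRelations

variable {S R : Type*} [CommRing S] [CommRing R] [Algebra S R] {m : ℕ}

local notation "π" => Ideal.Quotient.mk (hsRel S R m)

lemma hsGen_zero (x : R) : hsGen R m 0 x = C x := by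
  simp [hsGen]

lemma hsGen_of_lt {n : ℕ} (hn : m < n) (x : R) : hsGen R m n x = 0 := by
  rw [hsGen, dif_neg (by omega), if_neg (by omega)]

lemma mk_hsGen_algebraMap {i : ℕ} (hi : 1 ≤ i) (s : S) :
    π (hsGen R m i (algebraMap S R s)) = 0 :=
  Ideal.Quotient.eq_zero_iff_mem.mpr <| Ideal.subset_span <| Or.inr <| Or.inl ⟨i, hi, s, rfl⟩

lemma mk_hsGen_mul {k : ℕ} (hk : k ≤ m) (x y : R) :
    π (hsGen R m k (x * y)) =
      ∑ q ∈ Finset.HasAntidiagonal.antidiagonal k, π (hsGen R m q.1 x) * π (hsGen R m q.2 y) := by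
  simp_rw [← map_mul, ← map_sum]
  exact Ideal.Quotient.eq.mpr <| Ideal.subset_span <| Or.inr <| Or.inr ⟨k, hk, x, y, rfl⟩

lemma mk_hsGen_mul_algebraMap (i : ℕ) (x : R) (s : S) :
    π (hsGen R m i (x * algebraMap S R s)) = π (hsGen R m i x) * π (C (algebraMap S R s)) := by
  rcases le_or_gt i m with him | hmi
  · rw [mk_hsGen_mul him, Finset.sum_eq_single_of_mem (i, 0) (by simp), hsGen_zero]
    rintro ⟨a, b⟩ hab hne
    have hb : 1 ≤ b := by
      rw [Finset.HasAntidiagonal.mem_antidiagonal] at hab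
      by_contra! hb0
      obtain rfl : b = 0 := by omega
      exact hne (by simpa using hab)
    rw [mk_hsGen_algebraMap hb, mul_zero]
  · simp [hsGen_of_lt hmi]

lemma mk_hsGen_eq_zero_of_mul_mem_range {i : ℕ} (hi : 1 ≤ i) {x : R} {c s : S}
    (hc : IsUnit (algebraMap S R c)) (hxc : x * algebraMap S R c = algebraMap S R s) :
    π (hsGen R m i x) = 0 := by
  have hCc : IsUnit (π (C (algebraMap S R c))) := (hc.map C).map π
  rw [← hCc.mul_left_eq_zero, ← mk_hsGen_mul_algebraMap, hxc, mk_hsGen_algebraMap hi]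

lemma hsRel_le_of_isScalarTower (T : Type*) [CommRing T] [Algebra S T] [Algebra T R]
    [IsScalarTower S T R] : hsRel S R m ≤ hsRel T R m := by
  refine Ideal.span_mono ?_
  rintro p (h | ⟨i, hi, s, rfl⟩ | h)
  · exact Or.inl h
  · exact Or.inr (Or.inl ⟨i, hi, algebraMap S T s, by rw [← IsScalarTower.algebraMap_apply]⟩)
  · exact Or.inr (Or.inr h)

lemma hsRel_eq_of_isLocalization (M : Submonoid S) (T : Type*) [CommRing T] [Algebra S T]
    [IsLocalization M T] [Algebra T R] [IsScalarTower S T R] :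
    hsRel S R m = hsRel T R m := by
  refine le_antisymm (hsRel_le_of_isScalarTower T) ?_
  rw [hsRel, Ideal.span_le]
  rintro p (h | ⟨i, hi, t, rfl⟩ | h)
  · exact Ideal.subset_span (Or.inl h)
  · obtain ⟨⟨s, c⟩, hsc⟩ := IsLocalization.surj M t
    refine Ideal.Quotient.eq_zero_iff_mem.mp
      (mk_hsGen_eq_zero_of_mul_mem_range hi (c := c) (s := s) ?_ ?_)
    · rw [IsScalarTower.algebraMap_apply S T R]
      exact (IsLocalization.map_units T c).map _
    · simp only [IsScalarTower.algebraMap_apply S T R, ← map_mul, hsc]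
  · exact Ideal.subset_span (Or.inr (Or.inr h))

end HasseSchmidtRelations

/-- If the structure morphism `S → R` factors through the localization
`S[L₁⁻¹]` for a multiplicative subset `L₁ ⊆ S` (i.e. `R` is an `S[L₁⁻¹]`-algebra
compatibly with its `S`-algebra structure), then `HS^m_{R/S} ≅ HS^m_{R/S[L₁⁻¹]}`
as `R`-algebras. -/
theorem hsAlg_base_localization (S R : Type*) [CommRing S] [CommRing R] [Algebra S R]
    (L₁ : Submonoid S) [Algebra (Localization L₁) R]
    [IsScalarTower S (Localization L₁) R] (m : ℕ) :
    Nonempty (HSAlg S R m ≃ₐ[R] HSAlg (Localization L₁) R m) :=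
  ⟨Ideal.quotientEquivAlgOfEq R (hsRel_eq_of_isLocalization L₁ (Localization L₁))⟩
end
end

section
/- Jet spaces commute with base change: given morphisms of schemes f: X → Y and Y' → Y, setting X' := X ×_Y Y', there is an isomorphism of Y'-schemes J_m(X'/Y') ≅ J_m(X/Y) ×_Y Y' for all 0 ≤ m ≤ ∞. In the affine formulation: for ring maps S → R and S → S', with R' := R ⊗_S S', one has HS^m_{R'/S'} ≅ HS^m_{R/S} ⊗_S S'. -/
noncomputable section
open MvPolynomial TensorProduct

/-!
`HS^m_{R'/S'}` is presented by symbols `d^n z` subject to the Hasse–Schmidt relations. Since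
`d^n (s * x) = s * d^n x` for `s ∈ S` (Leibniz rule plus `d^i s = 0` for `i ≥ 1`), each `d^n` is
`S`-linear, and its base change `s' ⊗ x ↦ s' ⊗ d^n x` satisfies the relations over `S'`; this
gives `HS^m_{R'/S'} → S' ⊗ HS^m_{R/S}`. Conversely, the structure map of `S'` and the map induced
by `R → R'` give `S' ⊗ HS^m_{R/S} → HS^m_{R'/S'}`. Both composites fix the generators.
-/

namespace HSAlg

open Finset.HasAntidiagonal

variable {S R : Type*} [CommRing S] [CommRing R] [Algebra S R] {m : ℕ}

variable (S m) in
def D (n : ℕ) (x : R) : HSAlg S R m :=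
  Ideal.Quotient.mk (hsRel S R m) (hsGen R m n x)

theorem D_of_lt {n : ℕ} (h : m < n) (x : R) : D S m n x = 0 := by
  rw [D, hsGen, dif_neg (by omega), if_neg (by omega), map_zero]
  rfl

theorem D_add (n : ℕ) (x y : R) : D S m n (x + y) = D S m n x + D S m n y := by
  have h := Ideal.Quotient.eq_zero_iff_mem.mpr
    (Ideal.subset_span (Or.inl ⟨n, x, y, rfl⟩) : _ ∈ hsRel S R m)
  rwa [map_sub, map_sub, sub_sub, sub_eq_zero] at h

theorem D_algebraMap {n : ℕ} (hn : 1 ≤ n) (s : S) : D S m n (algebraMap S R s) = 0 :=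
  Ideal.Quotient.eq_zero_iff_mem.mpr (Ideal.subset_span (Or.inr (Or.inl ⟨n, hn, s, rfl⟩)))

theorem D_mul {k : ℕ} (hk : k ≤ m) (x y : R) :
    D S m k (x * y) = ∑ q ∈ antidiagonal k, D S m q.1 x * D S m q.2 y := by
  have h := Ideal.Quotient.eq_zero_iff_mem.mpr
    (Ideal.subset_span (Or.inr (Or.inr ⟨k, hk, x, y, rfl⟩)) : _ ∈ hsRel S R m)
  rwa [map_sub, sub_eq_zero, map_sum] at h

theorem D_zero (x : R) : D S m 0 x = algebraMap R (HSAlg S R m) x :=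
  rfl

theorem D_one {n : ℕ} (hn : 1 ≤ n) : D S m n (1 : R) = 0 := by
  simpa using D_algebraMap (R := R) (m := m) hn (1 : S)

theorem D_algebraMap_mul (n : ℕ) (s : S) (x : R) :
    D S m n (algebraMap S R s * x) = algebraMap S (HSAlg S R m) s * D S m n x := by
  obtain hn | hn := le_or_gt n m
  · rw [D_mul hn, Finset.sum_eq_single_of_mem (0, n) (by simp)]
    · rw [D_zero]; rfl
    · rintro ⟨p, q⟩ hpq hne
      have hp : 1 ≤ p := by
        rw [mem_antidiagonal] at hpq
        by_contra! h0
        exact hne (by simp_all)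
      rw [D_algebraMap hp, zero_mul]
  · rw [D_of_lt hn, D_of_lt hn, mul_zero]

variable (S m) in
def Dₗ (n : ℕ) : R →ₗ[S] HSAlg S R m where
  toFun := D S m n
  map_add' := D_add n
  map_smul' s x := by
    simpa only [Algebra.smul_def, RingHom.id_apply] using D_algebraMap_mul n s x

@[simp] theorem Dₗ_apply (n : ℕ) (x : R) : Dₗ S m n x = D S m n x := rfl

instance (priority := low) (S₀ : Type*) [CommRing S₀] [Algebra S₀ R] :
    Algebra S₀ (HSAlg S R m) :=
  Ideal.Quotient.algebra S₀

instance (priority := low) (S₀ S₁ : Type*) [CommRing S₀] [CommRing S₁] [Algebra S₀ S₁]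
    [Algebra S₀ R] [Algebra S₁ R] [IsScalarTower S₀ S₁ R] :
    IsScalarTower S₀ S₁ (HSAlg S R m) :=
  Ideal.Quotient.isScalarTower _ _ _

theorem algHom_ext {S₀ A : Type*} [CommRing S₀] [Algebra S₀ R] [CommRing A] [Algebra S₀ A]
    {f g : HSAlg S R m →ₐ[S₀] A} (h : ∀ n x, f (D S m n x) = g (D S m n x)) : f = g := by
  refine AlgHom.coe_ringHom_injective <|
    Ideal.Quotient.ringHom_ext <| MvPolynomial.ringHom_ext ?_ ?_
  · exact fun x => h 0 x
  · rintro ⟨⟨n, hn⟩, x⟩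
    have hX := h n x
    rw [D, hsGen, dif_pos hn] at hX
    exact hX

variable (S m) in
/-- With `E 0` a ring homomorphism, these conditions say that `x ↦ ∑ n, E n x * tⁿ` is a ring
map `R → A[t]/(t^(m+1))` agreeing with `E 0` on the image of `S`. -/
structure IsHSFamily {A : Type*} [CommRing A] (E : ℕ → R → A) : Prop where
  map_add (n : ℕ) (x y : R) : E n (x + y) = E n x + E n y
  map_algebraMap {n : ℕ} (hn : 1 ≤ n) (s : S) : E n (algebraMap S R s) = 0
  map_mul {k : ℕ} (hk : k ≤ m) (x y : R) :
    E k (x * y) = ∑ q ∈ antidiagonal k, E q.1 x * E q.2 y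
  eq_zero_of_lt {n : ℕ} (hn : m < n) (x : R) : E n x = 0

section Lift

variable {S₀ A : Type*} [CommRing S₀] [Algebra S₀ R] [CommRing A] [Algebra S₀ A]
  (f : R →ₐ[S₀] A) {E : ℕ → R → A} (hE : IsHSFamily S m E) (hE₀ : ∀ x, E 0 x = f x)

variable (m) in
def liftPoly (E : ℕ → R → A) :
    MvPolynomial ({i : ℕ // 1 ≤ i ∧ i ≤ m} × R) R →ₐ[S₀] A :=
  { eval₂Hom (f : R →+* A) (fun v => E v.1.1 v.2) with
    commutes' := fun s => by simp }

include hE hE₀ in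
theorem liftPoly_hsGen (n : ℕ) (x : R) : liftPoly m f E (hsGen R m n x) = E n x := by
  unfold hsGen
  split_ifs with h h0
  · simp [liftPoly]
  · simp [liftPoly, h0, hE₀]
  · rw [map_zero, hE.eq_zero_of_lt (by omega)]

include hE hE₀ in
theorem hsRel_le_ker_liftPoly : hsRel S R m ≤ RingHom.ker (liftPoly m f E) := by
  rw [hsRel, Ideal.span_le]
  rintro p (⟨n, x, y, rfl⟩ | ⟨n, hn, s, rfl⟩ | ⟨k, hk, x, y, rfl⟩) <;>
    simp only [SetLike.mem_coe, RingHom.mem_ker, map_sub, map_sum, map_mul,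
      liftPoly_hsGen f hE hE₀]
  · rw [hE.map_add, sub_sub, sub_self]
  · exact hE.map_algebraMap hn s
  · rw [hE.map_mul hk, sub_self]

def lift : HSAlg S R m →ₐ[S₀] A :=
  Ideal.Quotient.liftₐ _ (liftPoly m f E) fun _ hp => hsRel_le_ker_liftPoly f hE hE₀ hp

theorem lift_D (n : ℕ) (x : R) : lift f hE hE₀ (D S m n x) = E n x :=
  liftPoly_hsGen f hE hE₀ n x

end Lift

section Map

variable {S₂ R₂ : Type*} [CommRing S₂] [CommRing R₂] [Algebra S S₂] [Algebra S₂ R₂]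
  [Algebra S R₂] [IsScalarTower S S₂ R₂] (φ : R →ₐ[S] R₂)

theorem isHSFamily_D_comp : IsHSFamily S m fun n x => D S₂ m n (φ x) where
  map_add n x y := by rw [map_add, D_add]
  map_algebraMap hn s := by
    rw [AlgHom.commutes, IsScalarTower.algebraMap_apply S S₂ R₂, D_algebraMap hn]
  map_mul hk x y := by rw [map_mul, D_mul hk]
  eq_zero_of_lt hn x := D_of_lt hn _

def map : HSAlg S R m →ₐ[S] HSAlg S₂ R₂ m :=
  lift ((IsScalarTower.toAlgHom S R₂ _).comp φ) (isHSFamily_D_comp φ) fun x => D_zero (φ x)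

theorem map_D (n : ℕ) (x : R) : map φ (D S m n x) = D S₂ m n (φ x) :=
  lift_D _ _ _ n x

end Map

section BaseChange

variable (S' : Type*) [CommRing S'] [Algebra S S']

/-- `Algebra.TensorProduct.tmul_mul_tmul` does not find this `Module S` instance by itself: the
additive structure underlying `Ideal.Quotient.algebra` matches that of `HSAlg` only after
unfolding beyond instance transparency. -/
theorem tmul_mul_tmul (a b : S') (x y : HSAlg S R m) :
    a ⊗ₜ[S] x * b ⊗ₜ[S] y = (a * b) ⊗ₜ[S] (x * y) :=
  @Algebra.TensorProduct.tmul_mul_tmul S S' (HSAlg S R m) _ _ _ _ _ _ Algebra.toModule _ _ _ _ _ _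

theorem isHSFamily_baseChange_Dₗ :
    IsHSFamily S' m fun n => (Dₗ S m n).baseChange S' (M := R) where
  map_add n := map_add _
  map_algebraMap hn s' := by
    rw [Algebra.TensorProduct.algebraMap_apply, LinearMap.baseChange_tmul, Dₗ_apply, D_one hn,
      tmul_zero]
  map_mul {k} hk z w := by
    induction z using TensorProduct.induction_on with
    | zero => simp
    | add z₁ z₂ h₁ h₂ => simp only [add_mul, map_add, h₁, h₂, Finset.sum_add_distrib]
    | tmul s' x =>
      induction w using TensorProduct.induction_on with
      | zero => simp
      | add w₁ w₂ h₁ h₂ => simp only [mul_add, map_add, h₁, h₂, Finset.sum_add_distrib]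
      | tmul t' y =>
        simp only [Algebra.TensorProduct.tmul_mul_tmul, LinearMap.baseChange_tmul, Dₗ_apply,
          D_mul hk, tmul_sum, tmul_mul_tmul]
  eq_zero_of_lt hn z := by
    induction z using TensorProduct.induction_on with
    | zero => simp
    | add z₁ z₂ h₁ h₂ => rw [map_add, h₁, h₂, add_zero]
    | tmul s' x => rw [LinearMap.baseChange_tmul, Dₗ_apply, D_of_lt hn, tmul_zero]

def toBaseChange : HSAlg S' (S' ⊗[S] R) m →ₐ[S'] S' ⊗[S] HSAlg S R m :=
  lift (Algebra.TensorProduct.map (AlgHom.id S' S') (IsScalarTower.toAlgHom S R _))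
    (isHSFamily_baseChange_Dₗ S') fun z => by
      induction z using TensorProduct.induction_on with
      | zero => simp
      | add z₁ z₂ h₁ h₂ => rw [map_add, map_add, h₁, h₂]
      | tmul s' x => simp [D_zero]

theorem toBaseChange_D (n : ℕ) (z : S' ⊗[S] R) :
    toBaseChange S' (D S' m n z) = (Dₗ S m n).baseChange S' z :=
  lift_D _ _ _ n z

def ofBaseChange : S' ⊗[S] HSAlg S R m →ₐ[S'] HSAlg S' (S' ⊗[S] R) m :=
  Algebra.TensorProduct.lift (Algebra.ofId _ _) (map Algebra.TensorProduct.includeRight)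
    fun _ _ => .all _ _

theorem ofBaseChange_tmul (s' : S') (x : HSAlg S R m) :
    ofBaseChange S' (s' ⊗ₜ[S] x) =
      algebraMap S' _ s' * map Algebra.TensorProduct.includeRight x :=
  Algebra.TensorProduct.lift_tmul _ _ _ _ _

theorem ofBaseChange_comp_toBaseChange :
    (ofBaseChange S').comp (toBaseChange S') = AlgHom.id S' (HSAlg S' (S' ⊗[S] R) m) := by
  refine algHom_ext fun n z => ?_
  rw [AlgHom.comp_apply, toBaseChange_D, AlgHom.id_apply]
  induction z using TensorProduct.induction_on with
  | zero => rw [map_zero, map_zero, ← Dₗ_apply, map_zero]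
  | add z₁ z₂ h₁ h₂ => rw [map_add, map_add, h₁, h₂, D_add]
  | tmul s' x =>
    rw [LinearMap.baseChange_tmul, ofBaseChange_tmul, Dₗ_apply, map_D,
      Algebra.TensorProduct.includeRight_apply, ← Dₗ_apply, ← Dₗ_apply,
      ← Algebra.smul_def, ← LinearMap.map_smul, smul_tmul', smul_eq_mul, mul_one]

theorem toBaseChange_comp_ofBaseChange :
    (toBaseChange S').comp (ofBaseChange S') = AlgHom.id S' (S' ⊗[S] HSAlg S R m) := by
  refine Algebra.TensorProduct.ext (Subsingleton.elim _ _) (algHom_ext fun n x => ?_)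
  simp only [AlgHom.comp_apply, AlgHom.restrictScalars_apply,
    Algebra.TensorProduct.includeRight_apply, ofBaseChange_tmul, map_one, one_mul, map_D,
    toBaseChange_D, LinearMap.baseChange_tmul, Dₗ_apply, AlgHom.id_apply]

def baseChangeEquiv : HSAlg S' (S' ⊗[S] R) m ≃ₐ[S'] S' ⊗[S] HSAlg S R m :=
  AlgEquiv.ofAlgHom (toBaseChange S') (ofBaseChange S') (toBaseChange_comp_ofBaseChange S')
    (ofBaseChange_comp_toBaseChange S')

end BaseChange

end HSAlg

/-- Jet spaces commute with base change: for `f : X → Y` and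
`Y' → Y`, with `X' := X ×_Y Y'`, one has `J_m(X'/Y') ≅ J_m(X/Y) ×_Y Y'` over `Y'`.
In the affine formulation: for ring maps `S → R` and `S → S'`, with `R' := S' ⊗_S R`,
one has `HS^m_{R'/S'} ≅ S' ⊗_S HS^m_{R/S}` as `S'`-algebras. -/
theorem hsAlg_base_change (S R S' : Type*) [CommRing S] [CommRing R] [CommRing S']
    [Algebra S R] [Algebra S S'] (m : ℕ) :
    Nonempty (HSAlg S' (S' ⊗[S] R) m ≃ₐ[S'] (S' ⊗[S] HSAlg S R m)) :=
  ⟨HSAlg.baseChangeEquiv S'⟩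
end
end
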